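/- Fix an integer N ≥ 0, and for each 0 ≤ k ≤ N fix a family of k+1 distinct real nodes a^k_0, …, a^k_k with Lagrange basis polynomials ℓ^k_i. Then the real linear span of the semi-nodal basis functions {φ_{ijk} : 0 ≤ k ≤ N, 0 ≤ i, j ≤ k}, viewed as polynomials in the three variables a, b, c, equals the real linear span of the monomial family {a^i · b^j · (1−c)^k : 0 ≤ i ≤ k, 0 ≤ j ≤ k, 0 ≤ k ≤ N}. -/
import Mathlib


open Finset Polynomial in
/-- The Jacobi polynomial `P_n^{(α,0)}` as a real polynomial, via the explicit formula
`P_n^{(α,0)}(x) = ∑_{s=0}^{n} C(n+α, n−s)·C(n, s)·((x−1)/2)^s·((x+1)/2)^{n−s}`. -/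
noncomputable def jacobiPoly (n α : ℕ) : Polynomial ℝ :=
  ∑ s ∈ range (n + 1),
    C (((n + α).choose (n - s) : ℝ) * (n.choose s : ℝ)) *
      (C (2⁻¹ : ℝ) * (X - 1)) ^ s * (C (2⁻¹ : ℝ) * (X + 1)) ^ (n - s)

/-- The semi-nodal basis function
`φ_{ijk}(a,b,c) = ℓ^k_i(a)·ℓ^k_j(b)·((1−c)/2)^k·P_{N−k}^{(2k+3,0)}(c)`, viewed as a
polynomial in the three variables `a = X 0`, `b = X 1`, `c = X 2`. -/
noncomputable def semiNodalPoly (ℓ : ℕ → ℕ → Polynomial ℝ) (N i j k : ℕ) :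
    MvPolynomial (Fin 3) ℝ :=
  Polynomial.aeval (MvPolynomial.X 0) (ℓ k i) *
    Polynomial.aeval (MvPolynomial.X 1) (ℓ k j) *
    (MvPolynomial.C (2⁻¹ : ℝ) * (1 - MvPolynomial.X 2)) ^ k *
    Polynomial.aeval (MvPolynomial.X 2) (jacobiPoly (N - k) (2 * k + 3))

open Finset Polynomial

lemma mem_span_monomials {n : ℕ} {p : Polynomial ℝ} (hp : p.degree ≤ (n : ℕ)) :
    p ∈ Submodule.span ℝ {q : Polynomial ℝ | ∃ s ≤ n, q = X ^ s} := by
  have h := p.as_sum_range' (n+1) (Nat.lt_succ_of_le (natDegree_le_iff_degree_le.2 hp))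
  rw [h]
  refine Submodule.sum_mem _ fun s hs => ?_
  rw [← Polynomial.smul_X_eq_monomial]
  exact Submodule.smul_mem _ _ (Submodule.subset_span ⟨s, Nat.lt_succ_iff.1 (mem_range.1 hs), rfl⟩)

lemma comp_oneSubX_comp (p : Polynomial ℝ) : (p.comp (1 - X)).comp (1 - X) = p := by
  rw [comp_assoc]
  simp

lemma natDegree_oneSubX : (1 - X : Polynomial ℝ).natDegree = 1 := by
  have : (1 - X : Polynomial ℝ) = -(X - Polynomial.C 1) := by rw [Polynomial.C_1]; ring
  rw [this, natDegree_neg, natDegree_X_sub_C]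

lemma expand_oneSubX {n : ℕ} {p : Polynomial ℝ} (hp : p.degree ≤ (n : ℕ)) :
    p = ∑ u ∈ range (n + 1), ((p.comp (1 - X)).coeff u) • (1 - X) ^ u := by
  conv_lhs => rw [← comp_oneSubX_comp p]
  have hdq : (p.comp (1 - X)).natDegree < n + 1 := by
    rw [natDegree_comp, natDegree_oneSubX, mul_one]
    exact Nat.lt_succ_of_le (natDegree_le_iff_degree_le.2 hp)
  conv_lhs => rw [(p.comp (1 - X)).as_sum_range' (n+1) hdq]
  rw [Polynomial.sum_comp]
  refine Finset.sum_congr rfl fun u _ => ?_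
  rw [← Polynomial.C_mul_X_pow_eq_monomial, mul_comp, C_comp, pow_comp, X_comp,
    ← Polynomial.smul_eq_C_mul]

lemma jacobi_degree_le (n α : ℕ) : (jacobiPoly n α).degree ≤ (n : ℕ) := by
  refine (degree_sum_le _ _).trans ?_
  rw [Finset.sup_le_iff]
  intro s hs
  have hx1 : ((X : Polynomial ℝ) - 1).degree ≤ (1 : WithBot ℕ) :=
    (degree_sub_le _ _).trans (max_le (by simp [degree_X]) (by simp [degree_one]))
  have hx2 : ((X : Polynomial ℝ) + 1).degree ≤ (1 : WithBot ℕ) :=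
    (degree_add_le _ _).trans (max_le (by simp [degree_X]) (by simp [degree_one]))
  have h1 : (C (2⁻¹ : ℝ) * (X - 1)).degree ≤ (1 : WithBot ℕ) :=
    (degree_mul_le_of_le degree_C_le hx1).trans (by simp)
  have h2 : (C (2⁻¹ : ℝ) * (X + 1)).degree ≤ (1 : WithBot ℕ) :=
    (degree_mul_le_of_le degree_C_le hx2).trans (by simp)
  have hsn : s ≤ n := Nat.lt_succ_iff.1 (mem_range.1 hs)
  refine (degree_mul_le_of_le (degree_mul_le_of_le degree_C_le
    (degree_pow_le_of_le s h1)) (degree_pow_le_of_le (n - s) h2)).trans ?_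
  rw [zero_add, mul_one, mul_one]
  exact_mod_cast (by omega : s + (n - s) ≤ n)

lemma jacobi_eval_one (n α : ℕ) : (jacobiPoly n α).eval 1 = ((n + α).choose n : ℝ) := by
  rw [jacobiPoly, eval_finset_sum]
  rw [Finset.sum_eq_single 0]
  · norm_num
  · intro s hs hne
    simp [eval_mul, eval_pow, sub_self, zero_pow hne]
  · intro h
    exact absurd (mem_range.2 (Nat.succ_pos n)) h

lemma lagrange_pow {k : ℕ} (b : ℕ → ℝ) (L : ℕ → Polynomial ℝ)
    (hdist : ∀ i ≤ k, ∀ m ≤ k, b i = b m → i = m)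
    (hdeg : ∀ i ≤ k, (L i).degree ≤ (k : ℕ))
    (heval : ∀ i ≤ k, ∀ m ≤ k, (L i).eval (b m) = if i = m then 1 else 0)
    {i : ℕ} (hi : i ≤ k) :
    (X : Polynomial ℝ) ^ i = ∑ m ∈ range (k + 1), (b m) ^ i • L m := by
  have h0 : ((X : Polynomial ℝ) ^ i - ∑ m ∈ range (k + 1), (b m) ^ i • L m) = 0 := by
    apply eq_zero_of_natDegree_lt_card_of_eval_eq_zero _
      (f := fun m : Fin (k + 1) => b m.1)
    · intro m m' h
      exact Fin.ext (hdist m.1 (Nat.lt_succ_iff.1 m.isLt) m'.1 (Nat.lt_succ_iff.1 m'.isLt) h)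
    · intro m
      simp only [eval_sub, eval_pow, eval_X, eval_finset_sum, eval_smul, smul_eq_mul]
      rw [Finset.sum_eq_single m.1]
      · rw [heval m.1 (Nat.lt_succ_iff.1 m.isLt) m.1 (Nat.lt_succ_iff.1 m.isLt)]
        simp
      · intro m' hm' hne
        rw [heval m' (Nat.lt_succ_iff.1 (mem_range.1 hm')) m.1 (Nat.lt_succ_iff.1 m.isLt)]
        simp [hne]
      · intro h
        exact absurd (mem_range.2 m.isLt) h
    · rw [Fintype.card_fin]
      refine Nat.lt_succ_of_le (natDegree_le_iff_degree_le.2 ?_)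
      refine (degree_sub_le _ _).trans (max_le ?_ ?_)
      · rw [degree_X_pow]; exact_mod_cast hi
      · refine (degree_sum_le _ _).trans ?_
        rw [Finset.sup_le_iff]
        intro m hm
        exact (degree_smul_le _ _).trans (hdeg m (Nat.lt_succ_iff.1 (mem_range.1 hm)))
  exact sub_eq_zero.1 h0

lemma jacobi_c0_ne (n α : ℕ) : ((jacobiPoly n α).comp (1 - X)).coeff 0 ≠ 0 := by
  rw [coeff_zero_eq_eval_zero, eval_comp]
  simp only [eval_sub, eval_one, eval_X, sub_zero]
  rw [jacobi_eval_one]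
  exact_mod_cast (Nat.choose_pos (Nat.le_add_right n α)).ne'

lemma psi_expand (N k : ℕ) :
    (2:ℝ)^k • ((C (2⁻¹:ℝ) * (1 - X))^k * jacobiPoly (N - k) (2*k+3)) =
      ∑ u ∈ range (N - k + 1),
        (((jacobiPoly (N - k) (2*k+3)).comp (1 - X)).coeff u) • (1 - X)^(k + u) := by
  have hJ := expand_oneSubX (jacobi_degree_le (N - k) (2*k+3))
  conv_lhs => rw [hJ]
  rw [Finset.mul_sum, Finset.smul_sum]
  refine Finset.sum_congr rfl fun u _ => ?_
  rw [mul_pow, ← C_pow, ← smul_eq_C_mul, smul_mul_assoc, smul_smul, mul_smul_comm,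
    smul_smul, ← pow_add]
  norm_num [← mul_pow, mul_comm]

/-- For each `0 ≤ k ≤ N`, given `k+1` distinct nodes `a^k_0, …, a^k_k` with Lagrange
basis polynomials `ℓ^k_i`, the span of the semi-nodal basis functions
`{φ_{ijk} : 0 ≤ k ≤ N, 0 ≤ i,j ≤ k}` equals the span of the monomial family
`{a^i·b^j·(1−c)^k : 0 ≤ i ≤ k, 0 ≤ j ≤ k, 0 ≤ k ≤ N}`. -/
theorem semiNodal_span (N : ℕ) (a : ℕ → ℕ → ℝ) (ℓ : ℕ → ℕ → Polynomial ℝ)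
    (hdist : ∀ k ≤ N, ∀ i ≤ k, ∀ m ≤ k, a k i = a k m → i = m)
    (hldeg : ∀ k ≤ N, ∀ i ≤ k, (ℓ k i).degree ≤ (k : ℕ))
    (hleval : ∀ k ≤ N, ∀ i ≤ k, ∀ m ≤ k, (ℓ k i).eval (a k m) = if i = m then 1 else 0) :
    Submodule.span ℝ
        {p : MvPolynomial (Fin 3) ℝ |
          ∃ k ≤ N, ∃ i ≤ k, ∃ j ≤ k, p = semiNodalPoly ℓ N i j k}
      = Submodule.span ℝ
        {p : MvPolynomial (Fin 3) ℝ |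
          ∃ k ≤ N, ∃ i ≤ k, ∃ j ≤ k,
            p = MvPolynomial.X 0 ^ i * MvPolynomial.X 1 ^ j *
                  (1 - MvPolynomial.X 2) ^ k} := by
  classical
  set x0 : MvPolynomial (Fin 3) ℝ := MvPolynomial.X 0 with hx0
  set x1 : MvPolynomial (Fin 3) ℝ := MvPolynomial.X 1 with hx1
  set x2 : MvPolynomial (Fin 3) ℝ := MvPolynomial.X 2 with hx2
  set Φ : Set (MvPolynomial (Fin 3) ℝ) :=
    {p | ∃ k ≤ N, ∃ i ≤ k, ∃ j ≤ k, p = semiNodalPoly ℓ N i j k} with hΦ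
  set M : Set (MvPolynomial (Fin 3) ℝ) :=
    {p | ∃ k ≤ N, ∃ i ≤ k, ∃ j ≤ k, p = x0 ^ i * x1 ^ j * (1 - x2) ^ k} with hM
  refine le_antisymm (Submodule.span_le.2 ?_) (Submodule.span_le.2 ?_)
  · -- semi-nodal functions lie in the span of the monomials
    rintro p ⟨k, hk, i, hi, j, hj, rfl⟩
    have hA : Polynomial.aeval x0 (ℓ k i) ∈ Submodule.span ℝ
        ((Polynomial.aeval x0 : Polynomial ℝ →ₐ[ℝ] MvPolynomial (Fin 3) ℝ).toLinearMap ''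
          {q : Polynomial ℝ | ∃ s ≤ k, q = X ^ s}) := by
      rw [← Submodule.map_span]
      exact Submodule.mem_map_of_mem (mem_span_monomials (hldeg k hk i hi))
    have hB : Polynomial.aeval x1 (ℓ k j) ∈ Submodule.span ℝ
        ((Polynomial.aeval x1 : Polynomial ℝ →ₐ[ℝ] MvPolynomial (Fin 3) ℝ).toLinearMap ''
          {q : Polynomial ℝ | ∃ s ≤ k, q = X ^ s}) := by
      rw [← Submodule.map_span]
      exact Submodule.mem_map_of_mem (mem_span_monomials (hldeg k hk j hj))
    have hψ1 : ((C (2⁻¹:ℝ) * (1 - X))^k * jacobiPoly (N - k) (2*k+3)) ∈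
        Submodule.span ℝ {q : Polynomial ℝ | ∃ t, k ≤ t ∧ t ≤ N ∧ q = (1 - X)^t} := by
      have hrw : ((C (2⁻¹:ℝ) * (1 - X))^k * jacobiPoly (N - k) (2*k+3)) =
          ((2:ℝ)^k)⁻¹ • ∑ u ∈ range (N - k + 1),
            (((jacobiPoly (N - k) (2*k+3)).comp (1 - X)).coeff u) • (1 - X)^(k + u) := by
        rw [← psi_expand N k, inv_smul_smul₀ (by positivity)]
      rw [hrw]
      refine Submodule.smul_mem _ _ (Submodule.sum_mem _ fun u hu => ?_)
      refine Submodule.smul_mem _ _ (Submodule.subset_span ?_)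
      exact ⟨k + u, Nat.le_add_right _ _, by
        have := mem_range.1 hu; omega, rfl⟩
    have hC : (MvPolynomial.C (2⁻¹ : ℝ) * (1 - x2)) ^ k *
        Polynomial.aeval x2 (jacobiPoly (N - k) (2 * k + 3)) ∈ Submodule.span ℝ
        ((Polynomial.aeval x2 : Polynomial ℝ →ₐ[ℝ] MvPolynomial (Fin 3) ℝ).toLinearMap ''
          {q : Polynomial ℝ | ∃ t, k ≤ t ∧ t ≤ N ∧ q = (1 - X)^t}) := by
      have heq : (MvPolynomial.C (2⁻¹ : ℝ) * (1 - x2)) ^ k *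
          Polynomial.aeval x2 (jacobiPoly (N - k) (2 * k + 3)) =
          Polynomial.aeval x2 ((C (2⁻¹:ℝ) * (1 - X))^k * jacobiPoly (N - k) (2*k+3)) := by
        simp [map_mul, map_pow, map_sub, map_one, Polynomial.aeval_C,
          MvPolynomial.algebraMap_eq]
      rw [heq, ← Submodule.map_span]
      exact Submodule.mem_map_of_mem hψ1
    have hmem := Submodule.mul_mem_mul (Submodule.mul_mem_mul hA hB) hC
    rw [Submodule.span_mul_span, Submodule.span_mul_span] at hmem
    have hsemieq : semiNodalPoly ℓ N i j k =
        Polynomial.aeval x0 (ℓ k i) * Polynomial.aeval x1 (ℓ k j) *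
          ((MvPolynomial.C (2⁻¹ : ℝ) * (1 - x2)) ^ k *
            Polynomial.aeval x2 (jacobiPoly (N - k) (2 * k + 3))) := by
      rw [semiNodalPoly]; ring
    rw [hsemieq]
    refine Submodule.span_le.2 ?_ hmem
    rintro z ⟨_, ⟨_, ⟨qa, ⟨s, hs, rfl⟩, rfl⟩, _, ⟨qb, ⟨s', hs', rfl⟩, rfl⟩, rfl⟩,
      _, ⟨qc, ⟨t, hkt, htN, rfl⟩, rfl⟩, rfl⟩
    refine Submodule.subset_span ⟨t, htN, s, le_trans hs hkt, s', le_trans hs' hkt, ?_⟩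
    simp [map_pow, map_sub, map_one]
  · -- monomials lie in the span of the semi-nodal functions
    have key : ∀ d : ℕ, ∀ k, k ≤ N → N - k < d → ∀ i ≤ k, ∀ j ≤ k,
        x0 ^ i * x1 ^ j * (1 - x2) ^ k ∈ Submodule.span ℝ Φ := by
      intro d
      induction d with
      | zero => intro k _ h; omega
      | succ d ih =>
        intro k hk hd i hi j hj
        set J := jacobiPoly (N - k) (2 * k + 3) with hJdef
        set c : ℕ → ℝ := fun u => (J.comp (1 - X)).coeff u with hcdef
        have hc0 : c 0 ≠ 0 := jacobi_c0_ne _ _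
        have hsum : (2:ℝ)^k • ((C (2⁻¹:ℝ) * (1 - X))^k * J) -
            ∑ u ∈ range (N - k), c (u+1) • ((1:Polynomial ℝ) - X)^(k+u+1) =
            c 0 • ((1:Polynomial ℝ) - X)^k := by
          rw [psi_expand N k, Finset.sum_range_succ']
          simp only [← add_assoc, add_zero]
          exact add_sub_cancel_left _ _
        have hE : ((1:Polynomial ℝ) - X)^k = (c 0)⁻¹ •
            ((2:ℝ)^k • ((C (2⁻¹:ℝ) * (1 - X))^k * J) -
              ∑ u ∈ range (N - k), c (u+1) • ((1:Polynomial ℝ) - X)^(k+u+1)) := by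
          rw [hsum, smul_smul, inv_mul_cancel₀ hc0, one_smul]
        have hE2 : ((1:MvPolynomial (Fin 3) ℝ) - x2)^k = (c 0)⁻¹ •
            ((2:ℝ)^k • ((MvPolynomial.C (2⁻¹ : ℝ) * (1 - x2)) ^ k * Polynomial.aeval x2 J) -
              ∑ u ∈ range (N - k), c (u+1) • ((1:MvPolynomial (Fin 3) ℝ) - x2)^(k+u+1)) := by
          have h := congrArg (Polynomial.aeval x2) hE
          simpa [map_smul, map_sub, map_sum, map_pow, map_mul, map_one,
            Polynomial.aeval_C, MvPolynomial.algebraMap_eq] using h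
        have hmain : x0 ^ i * x1 ^ j * (1 - x2) ^ k = (c 0)⁻¹ •
            ((2:ℝ)^k • (x0 ^ i * x1 ^ j *
                ((MvPolynomial.C (2⁻¹ : ℝ) * (1 - x2)) ^ k * Polynomial.aeval x2 J)) -
              ∑ u ∈ range (N - k),
                c (u+1) • (x0 ^ i * x1 ^ j * (1 - x2)^(k+u+1))) := by
          rw [hE2]
          simp only [mul_smul_comm, mul_sub, Finset.mul_sum]
        rw [hmain]
        refine Submodule.smul_mem _ _ (Submodule.sub_mem _ (Submodule.smul_mem _ _ ?_)
          (Submodule.sum_mem _ fun u hu => Submodule.smul_mem _ _ ?_))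
        · have hA := lagrange_pow (a k) (ℓ k) (hdist k hk) (hldeg k hk) (hleval k hk) hi
          have hB := lagrange_pow (a k) (ℓ k) (hdist k hk) (hldeg k hk) (hleval k hk) hj
          have hA2 : x0 ^ i = ∑ m ∈ range (k+1), (a k m)^i • Polynomial.aeval x0 (ℓ k m) := by
            have h := congrArg (Polynomial.aeval x0) hA
            simpa [map_sum, map_smul, map_pow] using h
          have hB2 : x1 ^ j = ∑ m ∈ range (k+1), (a k m)^j • Polynomial.aeval x1 (ℓ k m) := by
            have h := congrArg (Polynomial.aeval x1) hB
            simpa [map_sum, map_smul, map_pow] using h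
          rw [hA2, hB2, Finset.sum_mul_sum, Finset.sum_mul]
          refine Submodule.sum_mem _ fun m hm => ?_
          rw [Finset.sum_mul]
          refine Submodule.sum_mem _ fun m' hm' => ?_
          have hterm : (a k m)^i • Polynomial.aeval x0 (ℓ k m) *
              ((a k m')^j • Polynomial.aeval x1 (ℓ k m')) *
              ((MvPolynomial.C (2⁻¹ : ℝ) * (1 - x2)) ^ k * Polynomial.aeval x2 J) =
              ((a k m)^i * (a k m')^j) • semiNodalPoly ℓ N m m' k := by
            rw [semiNodalPoly, ← hJdef, ← hx0, ← hx1, ← hx2]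
            simp only [smul_mul_assoc, mul_smul_comm, smul_smul]
            congr 1
            · ring
            · ring
          rw [hterm]
          refine Submodule.smul_mem _ _ (Submodule.subset_span ?_)
          exact ⟨k, hk, m, Nat.lt_succ_iff.1 (mem_range.1 hm),
            m', Nat.lt_succ_iff.1 (mem_range.1 hm'), rfl⟩
        · have hu' := mem_range.1 hu
          exact ih (k+u+1) (by omega) (by omega) i (by omega) j (by omega)
    rintro p ⟨k, hk, i, hi, j, hj, rfl⟩
    exact key (N + 1) k hk (by omega) i hi j hj
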